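/- arXiv:1110.5078 — 6 statements merged into one kernel-verified Lean document; each statement's English description precedes it below -/
import Mathlib

section
/- If p > q are odd primes and n is a positive integer not divisible by p or q, then G(pn) < G(qn), where G(m) = σ(m)/(m log log m). -/
noncomputable def G (n : ℕ) : ℝ := (ArithmeticFunction.sigma 1 n : ℝ) / (n * Real.log (Real.log n))

lemma sigma_prime_mul' (p n : ℕ) (hp : p.Prime) (hpn : ¬ p ∣ n) :
    ArithmeticFunction.sigma 1 (p * n) = (1 + p) * ArithmeticFunction.sigma 1 n := by
  have hc : Nat.Coprime p n := (Nat.Prime.coprime_iff_not_dvd hp).mpr hpn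
  rw [ArithmeticFunction.isMultiplicative_sigma.map_mul_of_coprime hc]
  congr 1
  rw [ArithmeticFunction.sigma_one_apply, hp.divisors]
  rw [Finset.sum_pair hp.one_lt.ne]

theorem G_mul_prime_lt_of_odd (p q n : ℕ) (hp : p.Prime) (hq : q.Prime)
    (hpo : Odd p) (hqo : Odd q) (hqp : q < p) (hn : 0 < n)
    (hpn : ¬ p ∣ n) (hqn : ¬ q ∣ n) : G (p * n) < G (q * n) := by
  have hq3 : 3 ≤ q := by
    have h2 := hq.two_le
    have : q ≠ 2 := by rintro rfl; exact (Nat.not_odd_iff_even.mpr even_two) hqo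
    omega
  -- real abbreviations
  set a : ℝ := (ArithmeticFunction.sigma 1 n : ℝ) with ha
  have ha0 : 0 < a := by
    have : 0 < ArithmeticFunction.sigma 1 n := by
      rw [ArithmeticFunction.sigma_one_apply]
      exact Finset.sum_pos (fun d hd => Nat.pos_of_mem_divisors hd)
        ⟨n, Nat.mem_divisors_self n hn.ne'⟩
    rw [ha]; exact_mod_cast this
  have hqr : (3 : ℝ) ≤ (q : ℝ) := by exact_mod_cast hq3
  have hnr : (1 : ℝ) ≤ (n : ℝ) := by exact_mod_cast hn
  have hqnr : (3 : ℝ) ≤ (q : ℝ) * n := by nlinarith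
  have hpq : ((q : ℝ)) < (p : ℝ) := by exact_mod_cast hqp
  have hlt : ((q : ℝ) * n) < ((p : ℝ) * n) := by
    have : (0 : ℝ) < n := by linarith
    nlinarith
  have hlogq : 1 < Real.log ((q : ℝ) * n) := by
    rw [Real.lt_log_iff_exp_lt (by linarith)]
    calc Real.exp 1 < 2.7182818286 := Real.exp_one_lt_d9
      _ ≤ 3 := by norm_num
      _ ≤ _ := hqnr
  have hloglt : Real.log ((q : ℝ) * n) < Real.log ((p : ℝ) * n) :=
    Real.log_lt_log (by linarith) hlt
  set B : ℝ := Real.log (Real.log ((q : ℝ) * n)) with hB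
  set A : ℝ := Real.log (Real.log ((p : ℝ) * n)) with hA
  have hB0 : 0 < B := Real.log_pos hlogq
  have hBA : B < A := Real.log_lt_log (by linarith) hloglt
  -- unfold G
  rw [G, G, sigma_prime_mul' p n hp hpn, sigma_prime_mul' q n hq hqn]
  push_cast
  rw [← hA, ← hB, ← ha]
  have hn0 : (0 : ℝ) < n := by linarith
  have hp0 : (0 : ℝ) < p := by linarith
  have hq0 : (0 : ℝ) < q := by linarith
  have hA0 : 0 < A := by linarith
  rw [div_lt_div_iff₀ (mul_pos (mul_pos hp0 hn0) hA0) (mul_pos (mul_pos hq0 hn0) hB0)]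
  have key : (1 + (p : ℝ)) * q * B < (1 + (q : ℝ)) * p * A := by
    have h1 : (1 + (p : ℝ)) * q * B < (1 + (p : ℝ)) * q * A := by
      apply mul_lt_mul_of_pos_left hBA
      positivity
    have h2 : (1 + (p : ℝ)) * q * A ≤ (1 + (q : ℝ)) * p * A := by
      apply mul_le_mul_of_nonneg_right _ (by linarith)
      nlinarith
    linarith
  nlinarith [mul_pos ha0 hn0, mul_lt_mul_of_pos_right key (mul_pos ha0 hn0)]
end

section
/- If p > q are primes not dividing n and n > 1, then G(pn) < G(qn), where G(m) = σ(m)/(m log log m). -/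
theorem G_mul_prime_lt (p q n : ℕ) (hp : p.Prime) (hq : q.Prime)
    (hqp : q < p) (hn : 1 < n) (hpn : ¬ p ∣ n) (hqn : ¬ q ∣ n) :
    G (p * n) < G (q * n) := by
  have hcp : Nat.Coprime p n := (Nat.Prime.coprime_iff_not_dvd hp).mpr hpn
  have hcq : Nat.Coprime q n := (Nat.Prime.coprime_iff_not_dvd hq).mpr hqn
  have hsp : ArithmeticFunction.sigma 1 (p * n)
      = (p + 1) * ArithmeticFunction.sigma 1 n := by
    rw [ArithmeticFunction.isMultiplicative_sigma.map_mul_of_coprime hcp]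
    congr 1
    rw [ArithmeticFunction.sigma_one_apply, hp.divisors, Finset.sum_pair hp.one_lt.ne]
    omega
  have hsq : ArithmeticFunction.sigma 1 (q * n)
      = (q + 1) * ArithmeticFunction.sigma 1 n := by
    rw [ArithmeticFunction.isMultiplicative_sigma.map_mul_of_coprime hcq]
    congr 1
    rw [ArithmeticFunction.sigma_one_apply, hq.divisors, Finset.sum_pair hq.one_lt.ne]
    omega
  have hq2 : (2 : ℕ) ≤ q := hq.two_le
  have hn2 : (2 : ℕ) ≤ n := hn
  have hqn4 : (4 : ℝ) ≤ (q : ℝ) * n := by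
    have : (4 : ℕ) ≤ q * n := by nlinarith
    exact_mod_cast this
  have hpq : (q : ℝ) < p := by exact_mod_cast hqp
  have hqpos : (0 : ℝ) < q := by positivity
  have hppos : (0 : ℝ) < p := lt_trans hqpos hpq
  have hnpos : (0 : ℝ) < n := by positivity
  have hlogq : 1 < Real.log ((q : ℝ) * n) := by
    rw [← Real.log_exp 1]
    apply Real.log_lt_log (Real.exp_pos 1)
    calc Real.exp 1 < 2.7182818286 := Real.exp_one_lt_d9
      _ < 4 := by norm_num
      _ ≤ _ := hqn4
  have hloglt : Real.log ((q : ℝ) * n) < Real.log ((p : ℝ) * n) := by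
    apply Real.log_lt_log (by positivity)
    exact mul_lt_mul_of_pos_right hpq hnpos
  have hLq : 0 < Real.log (Real.log ((q : ℝ) * n)) := Real.log_pos hlogq
  have hLlt : Real.log (Real.log ((q : ℝ) * n)) < Real.log (Real.log ((p : ℝ) * n)) :=
    Real.log_lt_log (lt_trans one_pos hlogq) hloglt
  have hLp : 0 < Real.log (Real.log ((p : ℝ) * n)) := lt_trans hLq hLlt
  have hspos : (0 : ℝ) < (ArithmeticFunction.sigma 1 n : ℝ) := by
    have h1 : n ≤ ArithmeticFunction.sigma 1 n := by
      rw [ArithmeticFunction.sigma_one_apply]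
      exact Finset.single_le_sum (f := id) (fun i _ => Nat.zero_le i)
        (Nat.mem_divisors_self n (by omega))
    have : 0 < ArithmeticFunction.sigma 1 n := by omega
    exact_mod_cast this
  unfold G
  rw [hsp, hsq]
  push_cast
  rw [div_lt_div_iff₀ (by positivity) (by positivity)]
  set Lp := Real.log (Real.log ((p : ℝ) * n))
  set Lq := Real.log (Real.log ((q : ℝ) * n))
  set s := (ArithmeticFunction.sigma 1 n : ℝ)
  have key1 : ((p : ℝ) + 1) * q * Lq < ((q : ℝ) + 1) * p * Lq := by
    have : ((p : ℝ) + 1) * q < ((q : ℝ) + 1) * p := by nlinarith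
    exact mul_lt_mul_of_pos_right this hLq
  have key2 : ((q : ℝ) + 1) * p * Lq < ((q : ℝ) + 1) * p * Lp :=
    mul_lt_mul_of_pos_left hLlt (by positivity)
  nlinarith [mul_pos hnpos hspos]
end

section
/- For any fixed positive integer n₀, every sufficiently large superabundant number is a multiple of n₀. -/
def Superabundant (s : ℕ) : Prop :=
  0 < s ∧ ∀ n : ℕ, 0 < n → n < s → (ArithmeticFunction.sigma 1 n : ℝ) / n < (ArithmeticFunction.sigma 1 s : ℝ) / s

/-!
Fix a prime `p` and let `s` be superabundant with `p ^ a ∥ s`. If some prime power `q ^ b ∥ s`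
exceeded `2 p ^ (a + 2)`, then, for the least `t` with `q ^ t > p`, the number `n = s p / q ^ t`
would be smaller than `s` with `σ(n)/n ≥ σ(s)/s`. So every prime power dividing `s` exactly is at
most `M = 2 p ^ (a + 2)`, hence `s ≤ M ^ M`; that is, `a → ∞` along the superabundant numbers.
-/

open ArithmeticFunction Filter
open scoped ArithmeticFunction.sigma

lemma sigma_one_prime_pow_mul_sub_one {p : ℕ} (hp : p.Prime) (j : ℕ) :
    (σ 1 (p ^ j) : ℤ) * (p - 1) = (p : ℤ) ^ (j + 1) - 1 := by
  rw [sigma_one_apply_prime_pow hp]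
  push_cast
  exact geom_sum_mul _ _

lemma sigma_one_pow_mul_pow_mul {p q m : ℕ} (hpq : p.Coprime q) (hpm : p.Coprime m)
    (hqm : q.Coprime m) (a b : ℕ) :
    σ 1 (p ^ a * (q ^ b * m)) = σ 1 (p ^ a) * σ 1 (q ^ b) * σ 1 m := by
  rw [isMultiplicative_sigma.map_mul_of_coprime
      (((hpq.pow_right b).mul_right hpm).pow_left a),
    isMultiplicative_sigma.map_mul_of_coprime (hqm.pow_left b), mul_assoc]

lemma sigma_one_pow_mul_le {p q : ℕ} (hp : p.Prime) (hq : q.Prime) {a t c : ℕ}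
    (hpt : p < q ^ t) (htp : q ^ t ≤ p * q) (hc : 2 * p ^ (a + 2) < q ^ (t + c)) :
    σ 1 (p ^ a) * σ 1 (q ^ (t + c)) * p ≤ σ 1 (p ^ (a + 1)) * σ 1 (q ^ c) * q ^ t := by
  have hp2 : (2 : ℤ) ≤ p := by exact_mod_cast hp.two_le
  have hq2 : (2 : ℤ) ≤ q := by exact_mod_cast hq.two_le
  have key : ∀ X Q T : ℤ, 0 ≤ X → p < T → T ≤ p * q → 2 * p * X < Q →
      (X - 1) * (q * Q - 1) * p ≤ (p * X - 1) * (q * Q - T) := by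
    intro X Q T hX hT hTq hQ
    -- the difference of the two sides is `(p - 1) q Q - p X (T - 1) + (T - p)`
    have h1 : p * X * (T - 1) ≤ p * X * (p * q) := by gcongr; nlinarith
    have h2 : (p - 1) * q * (2 * p * X) ≤ (p - 1) * q * Q := by gcongr; nlinarith
    have h3 : 0 ≤ (p - 2) * (p * q * X) := by positivity
    linear_combination h1 + h2 + h3 + hT
  have hA := sigma_one_prime_pow_mul_sub_one hp a
  have hB := sigma_one_prime_pow_mul_sub_one hq (t + c)
  have hC := sigma_one_prime_pow_mul_sub_one hp (a + 1)
  have hD := sigma_one_prime_pow_mul_sub_one hq c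
  have hpos : (0 : ℤ) < (p - 1) * (q - 1) := by nlinarith
  rw [← Nat.cast_le (α := ℤ), ← mul_le_mul_iff_of_pos_right hpos]
  push_cast
  calc (σ 1 (p ^ a) : ℤ) * σ 1 (q ^ (t + c)) * p * ((p - 1) * (q - 1))
      = ((p : ℤ) ^ (a + 1) - 1) * (q * (q : ℤ) ^ (t + c) - 1) * p := by
        rw [← pow_succ', ← hA, ← hB]; ring
    _ ≤ (p * (p : ℤ) ^ (a + 1) - 1) * (q * (q : ℤ) ^ (t + c) - (q : ℤ) ^ t) := by
        refine key _ _ _ (by positivity) (by exact_mod_cast hpt) (by exact_mod_cast htp) ?_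
        rw [mul_assoc, ← pow_succ']
        exact_mod_cast hc
    _ = σ 1 (p ^ (a + 1)) * σ 1 (q ^ c) * (q : ℤ) ^ t * ((p - 1) * (q - 1)) := by
        linear_combination (-(q : ℤ) ^ t * σ 1 (q ^ c) * (q - 1)) * hC
          - ((q : ℤ) ^ t * ((p : ℤ) ^ (a + 2) - 1)) * hD

lemma Nat.le_pow_of_forall_pow_factorization_le {s M : ℕ} (hs : s ≠ 0)
    (h : ∀ p, p.Prime → p ^ s.factorization p ≤ M) : s ≤ M ^ M := by
  have hM : 1 ≤ M := (Nat.one_le_two_pow).trans (h 2 Nat.prime_two)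
  have hsub : s.primeFactors ⊆ Finset.Icc 1 M := fun p hp => by
    obtain ⟨hp', hps, -⟩ := Nat.mem_primeFactors.1 hp
    exact Finset.mem_Icc.2 ⟨hp'.one_lt.le,
      (Nat.le_self_pow (hp'.factorization_pos_of_dvd hs hps).ne' p).trans (h p hp')⟩
  calc s = ∏ p ∈ s.primeFactors, p ^ s.factorization p :=
        Nat.prod_primeFactors_pow_factorization hs
    _ ≤ M ^ s.primeFactors.card :=
        Finset.prod_le_pow_card _ _ _ fun p hp => h p (Nat.prime_of_mem_primeFactors hp)
    _ ≤ M ^ M := Nat.pow_le_pow_right hM (by simpa using Finset.card_le_card hsub)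

namespace Superabundant

lemma sigma_mul_lt {s n : ℕ} (hs : Superabundant s) (hn : 0 < n) (hns : n < s) :
    σ 1 n * s < σ 1 s * n := by
  have h := hs.2 n hn hns
  rw [div_lt_div_iff₀ (by exact_mod_cast hn) (by exact_mod_cast hs.1)] at h
  exact_mod_cast h

lemma pow_le_two_mul_pow {p q a b m : ℕ} (hs : Superabundant (p ^ a * (q ^ b * m)))
    (hp : p.Prime) (hq : q.Prime) (hpq : p ≠ q) (hpm : p.Coprime m) (hqm : q.Coprime m) :
    q ^ b ≤ 2 * p ^ (a + 2) := by
  by_contra! hb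
  set t := Nat.log q p + 1
  have hpt : p < q ^ t := Nat.lt_pow_succ_log_self hq.one_lt p
  have htp : q ^ t ≤ p * q := Nat.mul_le_mul_right q (Nat.pow_log_le_self q hp.ne_zero)
  have htb : t ≤ b := Nat.log_lt_of_lt_pow hp.ne_zero <|
    calc p ≤ p ^ (a + 2) := Nat.le_self_pow (by omega) p
      _ < q ^ b := by omega
  obtain ⟨c, rfl⟩ := Nat.exists_eq_add_of_le htb
  have hcop := (Nat.coprime_primes hp hq).2 hpq
  set n := p ^ (a + 1) * (q ^ c * m)
  have hm : 0 < m := Nat.pos_of_mul_pos_left (Nat.pos_of_mul_pos_left hs.1)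
  have hn : 0 < n := Nat.mul_pos (pow_pos hp.pos _) (Nat.mul_pos (pow_pos hq.pos _) hm)
  have hns : n < p ^ a * (q ^ (t + c) * m) := by
    refine Nat.lt_of_mul_lt_mul_right (a := q ^ t) ?_
    calc n * q ^ t = p ^ a * (q ^ (t + c) * m) * p := by ring
      _ < p ^ a * (q ^ (t + c) * m) * q ^ t := Nat.mul_lt_mul_of_pos_left hpt hs.1
  refine (hs.sigma_mul_lt hn hns).not_ge ?_
  rw [sigma_one_pow_mul_pow_mul hcop hpm hqm, sigma_one_pow_mul_pow_mul hcop hpm hqm]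
  calc σ 1 (p ^ a) * σ 1 (q ^ (t + c)) * σ 1 m * n
      = σ 1 (p ^ a) * σ 1 (q ^ (t + c)) * p * (σ 1 m * (p ^ a * (q ^ c * m))) := by ring
    _ ≤ σ 1 (p ^ (a + 1)) * σ 1 (q ^ c) * q ^ t * (σ 1 m * (p ^ a * (q ^ c * m))) :=
        Nat.mul_le_mul_right _ (sigma_one_pow_mul_le hp hq hpt htp hb)
    _ = σ 1 (p ^ (a + 1)) * σ 1 (q ^ c) * σ 1 m * (p ^ a * (q ^ (t + c) * m)) := by ring

lemma pow_factorization_le {s p q : ℕ} (hs : Superabundant s) (hp : p.Prime) (hq : q.Prime) :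
    q ^ s.factorization q ≤ 2 * p ^ (s.factorization p + 2) := by
  rcases eq_or_ne p q with rfl | hpq
  · exact (Nat.pow_le_pow_right hp.pos (by omega)).trans (Nat.le_mul_of_pos_left _ two_pos)
  have hs0 : s ≠ 0 := hs.1.ne'
  set s' := ordCompl[p] s
  have hs' : s' ≠ 0 := (Nat.ordCompl_pos p hs0).ne'
  have hs'q : s'.factorization q = s.factorization q := by
    rw [Nat.factorization_ordCompl, Finsupp.erase_ne hpq.symm]
  have hdecomp : s = p ^ s.factorization p * (q ^ s.factorization q * ordCompl[q] s') := by
    rw [← hs'q, Nat.ordProj_mul_ordCompl_eq_self, Nat.ordProj_mul_ordCompl_eq_self]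
  refine pow_le_two_mul_pow (hdecomp ▸ hs) hp hq hpq ?_ (Nat.coprime_ordCompl hq hs')
  exact (Nat.coprime_ordCompl hp hs0).coprime_dvd_right (Nat.ordCompl_dvd s' q)

lemma le_of_factorization_lt {s p k : ℕ} (hs : Superabundant s) (hp : p.Prime)
    (hk : s.factorization p < k) : s ≤ (2 * p ^ (k + 1)) ^ (2 * p ^ (k + 1)) :=
  Nat.le_pow_of_forall_pow_factorization_le hs.1.ne' fun q hq =>
    (hs.pow_factorization_le hp hq).trans <|
      Nat.mul_le_mul_left 2 (Nat.pow_le_pow_right hp.pos (by omega))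

end Superabundant

lemma eventually_le_factorization_of_superabundant {p : ℕ} (hp : p.Prime) (k : ℕ) :
    ∀ᶠ s in atTop, Superabundant s → k ≤ s.factorization p :=
  (eventually_gt_atTop _).mono fun s hlt hs => by
    by_contra! hk
    exact (hs.le_of_factorization_lt hp hk).not_gt hlt

theorem superabundant_eventually_dvd (n₀ : ℕ) (h : 0 < n₀) :
    ∃ B : ℕ, ∀ s : ℕ, Superabundant s → B < s → n₀ ∣ s := by
  have hev : ∀ᶠ s in atTop, ∀ p ∈ n₀.factorization.support,
      Superabundant s → n₀.factorization p ≤ s.factorization p :=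
    (eventually_all_finset _).2 fun p hp => eventually_le_factorization_of_superabundant
      (Nat.prime_of_mem_primeFactors (Nat.support_factorization n₀ ▸ hp)) _
  obtain ⟨B, hB⟩ := eventually_atTop.1 hev
  refine ⟨B, fun s hs hBs => ?_⟩
  rw [← Nat.factorization_le_iff_dvd h.ne' hs.1.ne', Finsupp.le_iff]
  exact fun p hp => hB s hBs.le p hp hs
end

section
/- If r ≤ 5040 satisfies G(r) ≥ e^γ, and p ≥ 11 is prime, then G(pr) < e^γ. -/
/-!
For `r ≤ 2` one has `G r ≤ 0 < e^γ`. Otherwise, for a prime `p ≥ 11`,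
`σ(pr) ≤ (p + 1) σ(r) ≤ (12/11) p σ(r)` and `log log (pr) ≥ log log (11r)`, so
`G(pr) ≤ (12/11) σ(r) / (r log log (11r))`, and it remains to see that this is `< 1.76 < e^γ`
for `3 ≤ r ≤ 5040`. Cut `[3, 5040]` into blocks at superabundant numbers: on a block `[a, b)`,
`σ(r)/r` is bounded by its value at one superabundant `m` (a finite computation, done by the kernel
with divisors paired up to `√r`), and `log log (11r) ≥ log log (11a)`, which is bounded below
through the series of `log ((1 + x) / (1 - x))`.
-/

open Real Finset
open scoped ArithmeticFunction.sigma

theorem sigma_mul_le (k m n : ℕ) : σ k (m * n) ≤ σ k m * σ k n := by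
  simp only [ArithmeticFunction.sigma_apply, Nat.divisors_mul, sum_mul_sum, ← mul_pow]
  rw [← sum_product', mul_def]
  exact sum_image_le_of_nonneg fun _ _ => Nat.zero_le _

theorem sigma_one_mul_prime_le {p : ℕ} (hp : p.Prime) (r : ℕ) : σ 1 (p * r) ≤ (p + 1) * σ 1 r := by
  have hσp : σ 1 p = p + 1 := by
    simpa [sum_range_succ, add_comm] using ArithmeticFunction.sigma_one_apply_prime_pow hp (i := 1)
  simpa only [hσp] using sigma_mul_le 1 p r

/-- A form of `σ 1` that the kernel evaluates quickly: only the divisors `d ≤ √r` are enumerated,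
each paired with its cofactor `r / d`. -/
def sigmaSqrt (r : ℕ) : ℕ :=
  ∑ d ∈ Icc 1 r.sqrt with d ∣ r, (d + if d * d < r then r / d else 0)

lemma lt_div_mul_div_iff_mul_lt {d r : ℕ} (hd : d ∣ r) (hr : r ≠ 0) :
    r < r / d * (r / d) ↔ d * d < r := by
  obtain ⟨e, rfl⟩ := hd
  have hd0 : 0 < d := Nat.pos_of_ne_zero (left_ne_zero_of_mul hr)
  rw [Nat.mul_div_cancel_left e hd0,
    Nat.mul_lt_mul_right (Nat.pos_of_ne_zero (right_ne_zero_of_mul hr)), Nat.mul_lt_mul_left hd0]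

theorem sigma_one_eq_sigmaSqrt (r : ℕ) : σ 1 r = sigmaSqrt r := by
  rcases eq_or_ne r 0 with rfl | hr
  · rfl
  have hsmall : {d ∈ r.divisors | d * d ≤ r} = {d ∈ Icc 1 r.sqrt | d ∣ r} := by
    ext d
    simp only [mem_filter, Nat.mem_divisors, mem_Icc, Nat.le_sqrt]
    constructor
    · rintro ⟨⟨hd, -⟩, hdd⟩
      exact ⟨⟨Nat.pos_of_dvd_of_pos hd (Nat.pos_of_ne_zero hr), hdd⟩, hd⟩
    · rintro ⟨⟨-, hdd⟩, hd⟩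
      exact ⟨⟨hd, hr⟩, hdd⟩
  have hlarge : ∑ d ∈ r.divisors with ¬ d * d ≤ r, d
      = ∑ d ∈ r.divisors with d * d ≤ r, if d * d < r then r / d else 0 := by
    rw [sum_filter, ← Nat.sum_div_divisors, sum_filter]
    refine sum_congr rfl fun d hd => ?_
    simp only [not_le, lt_div_mul_div_iff_mul_lt (Nat.dvd_of_mem_divisors hd) hr]
    split_ifs <;> omega
  rw [ArithmeticFunction.sigma_one_apply, ← sum_filter_add_sum_filter_not _ (fun d => d * d ≤ r),
    hlarge, ← sum_add_distrib, hsmall, sigmaSqrt]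

lemma two_mul_add_le_log_div {x : ℝ} (hx0 : 0 ≤ x) (hx1 : x < 1) :
    2 * (x + x ^ 3 / 3) ≤ log ((1 + x) / (1 - x)) := by
  rw [log_div (by linarith) (by linarith)]
  have hsum := sum_le_hasSum (range 2) (fun k _ => by positivity)
    (hasSum_log_sub_log_of_abs_lt_one (abs_lt.mpr ⟨by linarith, hx1⟩))
  norm_num [sum_range_succ] at hsum
  linarith

/-- With `y = 2 ^ k (1 + x) / (1 - x)`: `k log 2`, rounded down, plus the first two terms of
`log ((1 + x) / (1 - x)) = 2 (x + x³/3 + x⁵/5 + ⋯)`. -/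
noncomputable def logLowerBound (k : ℕ) (y : ℝ) : ℝ :=
  let x := (y - 2 ^ k) / (y + 2 ^ k)
  k * 0.6931471803 + 2 * (x + x ^ 3 / 3)

lemma logLowerBound_le_log (k : ℕ) {y : ℝ} (hy : 2 ^ k ≤ y) : logLowerBound k y ≤ log y := by
  have h2k : (0 : ℝ) < 2 ^ k := by positivity
  set x := (y - 2 ^ k) / (y + 2 ^ k) with hx
  have hx0 : 0 ≤ x := div_nonneg (by linarith) (by linarith)
  have hx1 : x < 1 := (div_lt_one (by linarith)).mpr (by linarith)
  have hxy : (1 + x) / (1 - x) = y / 2 ^ k := by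
    have hs : y + 2 ^ k ≠ 0 := by linarith
    rw [hx, div_eq_div_iff (by linarith) h2k.ne']
    field_simp
    ring
  calc logLowerBound k y ≤ k * log 2 + 2 * (x + x ^ 3 / 3) := by
        dsimp only [logLowerBound]
        gcongr
        exact log_two_gt_d9.le
    _ ≤ k * log 2 + log (y / 2 ^ k) := by
        rw [← hxy]; gcongr; exact two_mul_add_le_log_div hx0 hx1
    _ = log y := by
        rw [log_div (by linarith) h2k.ne', log_pow]; ring

lemma logLowerBound_le_log_log {y : ℝ} (k₁ k₂ : ℕ) (h₁ : 2 ^ k₁ ≤ y)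
    (h₂ : 2 ^ k₂ ≤ logLowerBound k₁ y) :
    logLowerBound k₂ (logLowerBound k₁ y) ≤ log (log y) :=
  (logLowerBound_le_log k₂ h₂).trans
    (log_le_log ((pow_pos two_pos k₂).trans_le h₂) (logLowerBound_le_log k₁ h₁))

lemma log_log_le_log_log {x y : ℝ} (hx : 1 < x) (hxy : x ≤ y) : log (log x) ≤ log (log y) :=
  log_le_log (log_pos hx) (log_le_log (by linarith) hxy)

lemma log_log_pos {x : ℝ} (hx : 3 ≤ x) : 0 < log (log x) := by
  refine log_pos ((lt_log_iff_exp_lt (by linarith)).mpr ?_)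
  linarith [exp_one_lt_d9]

lemma eulerMascheroniConstant_gt_d4 : 0.5693 < eulerMascheroniConstant := by
  refine lt_of_le_of_lt ?_ (eulerMascheroniSeq_lt_eulerMascheroniConstant 63)
  have hH := (Rat.cast_le (K := ℝ)).mpr
    (by norm_num [harmonic, sum_range_succ] : (47282 / 10000 : ℚ) ≤ harmonic 63)
  simp only [Rat.cast_div, Rat.cast_ofNat] at hH
  have hlog : log ((63 : ℕ) + 1) = 6 * log 2 := by
    rw [show ((63 : ℕ) : ℝ) + 1 = 2 ^ 6 by norm_num, log_pow]; norm_num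
  rw [eulerMascheroniSeq, hlog]
  linarith [log_two_lt_d9]

lemma exp_eulerMascheroniConstant_gt_d2 : 1.76 < exp eulerMascheroniConstant :=
  calc (1.76 : ℝ) < ∑ i ∈ range 6, (0.5693 : ℝ) ^ i / i.factorial := by
        norm_num [sum_range_succ, Nat.factorial]
    _ ≤ exp 0.5693 := sum_le_exp_of_nonneg (by norm_num) 6
    _ < exp eulerMascheroniConstant := exp_lt_exp.mpr eulerMascheroniConstant_gt_d4

lemma G_nonpos_of_le_two {n : ℕ} (hn : n ≤ 2) : G n ≤ 0 := by
  have hlog : log n ≤ 1 := by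
    rcases Nat.eq_zero_or_pos n with rfl | hn0
    · simp
    · have : (n : ℝ) ≤ 2 := by exact_mod_cast hn
      linarith [log_le_sub_one_of_pos (x := n) (by positivity)]
  exact div_nonpos_of_nonneg_of_nonpos (by positivity)
    (mul_nonpos_of_nonneg_of_nonpos (by positivity) (log_nonpos (log_natCast_nonneg n) hlog))

theorem G_mul_prime_le {p r : ℕ} (hp : p.Prime) (hp11 : 11 ≤ p) (hr : 0 < r) :
    G (p * r) ≤ 12 * σ 1 r / (11 * r * log (log (11 * r))) := by
  have hp' : (11 : ℝ) ≤ p := by exact_mod_cast hp11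
  have hr' : (1 : ℝ) ≤ r := by exact_mod_cast hr
  have hX : 0 < log (log (11 * r)) := log_log_pos (by linarith)
  have hXY : log (log (11 * r)) ≤ log (log (p * r)) :=
    log_log_le_log_log (by linarith) (by gcongr)
  have hσ : (σ 1 (p * r) : ℝ) ≤ (p + 1) * σ 1 r := by
    exact_mod_cast sigma_one_mul_prime_le hp r
  have hY : 0 < log (log (p * r)) := hX.trans_le hXY
  rw [G, div_le_div_iff₀ (by push_cast; positivity) (by positivity)]
  push_cast
  calc (σ 1 (p * r) : ℝ) * (11 * r * log (log (11 * r)))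
      ≤ (p + 1) * σ 1 r * (11 * r * log (log (11 * r))) := by gcongr
    _ = 11 * (p + 1) * (σ 1 r * r * log (log (11 * r))) := by ring
    _ ≤ 12 * p * (σ 1 r * r * log (log (p * r))) :=
        mul_le_mul (by linarith) (by gcongr) (by positivity) (by positivity)
    _ = 12 * σ 1 r * (p * r * log (log (p * r))) := by ring

theorem twelve_mul_sigma_lt_of_mem_Ico {a b m s : ℕ} (k₁ k₂ : ℕ)
    (h₁ : 2 ^ k₁ ≤ 11 * (a : ℝ)) (h₂ : 2 ^ k₂ ≤ logLowerBound k₁ (11 * a))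
    (hs : 12 * s < 11 * 1.76 * logLowerBound k₂ (logLowerBound k₁ (11 * a)) * m)
    (hblock : ∀ r ∈ Ico a b, σ 1 r * m ≤ s * r) {r : ℕ} (hr : r ∈ Ico a b) :
    12 * σ 1 r < 11 * 1.76 * r * log (log (11 * r)) := by
  set q := logLowerBound k₂ (logLowerBound k₁ (11 * a))
  have ha : 0 < a := (Nat.cast_pos (α := ℝ)).mp (by linarith [pow_pos (two_pos (α := ℝ)) k₁])
  have ha' : (1 : ℝ) ≤ a := by exact_mod_cast ha
  have har : (a : ℝ) ≤ r := by exact_mod_cast (mem_Ico.mp hr).1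
  have hq : q ≤ log (log (11 * r)) := (logLowerBound_le_log_log k₁ k₂ h₁ h₂).trans
    (log_log_le_log_log (by linarith) (by gcongr))
  have hσ : (σ 1 r : ℝ) * m ≤ s * r := by exact_mod_cast hblock r hr
  refine lt_of_mul_lt_mul_right ?_ (Nat.cast_nonneg (α := ℝ) m)
  calc 12 * σ 1 r * (m : ℝ) ≤ 12 * s * r := by linarith
    _ < 11 * 1.76 * q * m * r := mul_lt_mul_of_pos_right hs (by linarith)
    _ = 11 * 1.76 * (m * r) * q := by ring
    _ ≤ 11 * 1.76 * (m * r) * log (log (11 * r)) := by gcongr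
    _ = 11 * 1.76 * r * log (log (11 * r)) * m := by ring

-- On each block `[a, b)`, `σ(r) / r` is largest at the superabundant number `m`, with `σ(m) = s`;
-- `k₁` and `k₂` are the integer parts of `log₂ (11a)` and `log₂ (log (11a))`.
theorem twelve_mul_sigma_lt {r : ℕ} (hr3 : 3 ≤ r) (hr : r ≤ 5040) :
    12 * σ 1 r < 11 * 1.76 * r * log (log (11 * r)) := by
  have hblocks : r ∈ Ico 3 12 ∨ r ∈ Ico 12 48 ∨ r ∈ Ico 48 120 ∨ r ∈ Ico 120 360 ∨
      r ∈ Ico 360 840 ∨ r ∈ Ico 840 2520 ∨ r ∈ Ico 2520 5040 ∨ r ∈ Ico 5040 5041 := by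
    simp only [mem_Ico]; omega
  rcases hblocks with h | h | h | h | h | h | h | h <;> [
    refine twelve_mul_sigma_lt_of_mem_Ico (m := 6) (s := 12) 5 1 ?_ ?_ ?_ ?_ h;
    refine twelve_mul_sigma_lt_of_mem_Ico (m := 36) (s := 91) 7 2 ?_ ?_ ?_ ?_ h;
    refine twelve_mul_sigma_lt_of_mem_Ico (m := 60) (s := 168) 9 2 ?_ ?_ ?_ ?_ h;
    refine twelve_mul_sigma_lt_of_mem_Ico (m := 240) (s := 744) 10 2 ?_ ?_ ?_ ?_ h;
    refine twelve_mul_sigma_lt_of_mem_Ico (m := 720) (s := 2418) 11 3 ?_ ?_ ?_ ?_ h;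
    refine twelve_mul_sigma_lt_of_mem_Ico (m := 1680) (s := 5952) 13 3 ?_ ?_ ?_ ?_ h;
    refine twelve_mul_sigma_lt_of_mem_Ico (m := 2520) (s := 9360) 14 3 ?_ ?_ ?_ ?_ h;
    refine twelve_mul_sigma_lt_of_mem_Ico (m := 5040) (s := 19344) 15 3 ?_ ?_ ?_ ?_ h] <;>
  first
    | (simp only [sigma_one_eq_sigmaSqrt]; decide +kernel)
    | norm_num [logLowerBound]

theorem G_mul_large_prime_lt (r p : ℕ) (hr : r ≤ 5040)
    (hG : Real.exp Real.eulerMascheroniConstant ≤ G r)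
    (hp : p.Prime) (hp11 : 11 ≤ p) :
    G (p * r) < Real.exp Real.eulerMascheroniConstant := by
  rcases Nat.lt_or_ge r 3 with hr3 | hr3
  · exact absurd (hG.trans (G_nonpos_of_le_two (by omega))) (exp_pos _).not_ge
  have hr' : (3 : ℝ) ≤ r := by exact_mod_cast hr3
  have hden : 0 < 11 * r * log (log (11 * r)) := by
    have := log_log_pos (x := 11 * r) (by linarith)
    positivity
  calc G (p * r) ≤ 12 * σ 1 r / (11 * r * log (log (11 * r))) :=
        G_mul_prime_le hp hp11 (by omega)
    _ < 1.76 := by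
        rw [div_lt_iff₀ hden]
        linarith [twelve_mul_sigma_lt hr3 hr]
    _ < exp eulerMascheroniConstant := exp_eulerMascheroniConstant_gt_d2
end

section
/- A composite number n is a GA1 number (i.e., G(n) ≥ G(n/p) for all prime factors p of n) if and only if for every prime p with p^k exactly dividing n (k ≥ 1), one has log log n / log log (n/p) ≤ (p^{k+1} − 1)/(p^{k+1} − p), provided n/p > 2 so both sides are well-defined with log log (n/p) > 0; when n/p = 2, the condition G(n) ≥ G(n/p) holds automatically since G(2) < 0. -/
def GA1 (n : ℕ) : Prop :=
  (1 < n ∧ ¬ n.Prime) ∧ ∀ p : ℕ, p.Prime → p ∣ n → G (n / p) ≤ G n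

lemma sigma_pos' {n : ℕ} (hn : n ≠ 0) : 0 < ArithmeticFunction.sigma 1 n := by
  rw [ArithmeticFunction.sigma_one_apply]
  exact Finset.sum_pos (fun d hd => Nat.pos_of_mem_divisors hd)
    ⟨1, Nat.one_mem_divisors.mpr hn⟩

lemma sigma_pp {p : ℕ} (hp : p.Prime) (k : ℕ) :
    ((ArithmeticFunction.sigma 1 (p ^ k) : ℕ) : ℝ) * ((p : ℝ) - 1) = (p : ℝ) ^ (k + 1) - 1 := by
  rw [ArithmeticFunction.sigma_one_apply, Nat.sum_divisors_prime_pow hp]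
  push_cast
  exact geom_sum_mul (p : ℝ) (k + 1)

lemma L_pos {n : ℕ} (hn : 3 ≤ n) : 0 < Real.log (Real.log n) := by
  apply Real.log_pos
  rw [show (1 : ℝ) = Real.log (Real.exp 1) by rw [Real.log_exp]]
  apply Real.log_lt_log (Real.exp_pos 1)
  calc Real.exp 1 < 2.7182818286 := Real.exp_one_lt_d9
    _ < 3 := by norm_num
    _ ≤ (n : ℝ) := by exact_mod_cast hn

lemma G_pos {n : ℕ} (hn : 3 ≤ n) : 0 < G n := by
  apply div_pos
  · exact_mod_cast sigma_pos' (by omega)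
  · exact mul_pos (by exact_mod_cast (by omega : 0 < n)) (L_pos hn)

lemma G_two_neg : G 2 < 0 := by
  have h1 : (ArithmeticFunction.sigma 1 2 : ℕ) = 3 := by decide
  have h2 : Real.log (Real.log 2) < 0 := by
    apply Real.log_neg (Real.log_pos one_lt_two)
    calc Real.log 2 < 0.6931471808 := Real.log_two_lt_d9
      _ < 1 := by norm_num
  unfold G
  rw [h1]
  apply div_neg_of_pos_of_neg (by norm_num)
  push_cast
  nlinarith

lemma real_key (K : ℕ) (a b s A B N M P : ℝ) (hapos : 0 < a) (hbpos : 0 < b) (hspos : 0 < s)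
    (hA : 0 < A) (hB : 0 < B) (hM : 0 < M) (hP : 1 < P) (hNM : N = P * M)
    (hE1 : a * (P - 1) = P ^ (K + 1) - 1) (hE2 : (P * b) * (P - 1) = P ^ (K + 1) - P) :
    (b * s / (M * B) ≤ a * s / (N * A) ↔
      A / B ≤ (P ^ (K + 1) - 1) / (P ^ (K + 1) - P)) := by
  subst hNM
  have hP0 : 0 < P := lt_trans one_pos hP
  have hP1 : (0 : ℝ) < P - 1 := by linarith
  have hden : 0 < P ^ (K + 1) - P := hE2 ▸ mul_pos (mul_pos hP0 hbpos) hP1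
  have hsM : (0 : ℝ) < s * M := mul_pos hspos hM
  rw [div_le_div_iff₀ (mul_pos hM hB) (mul_pos (mul_pos hP0 hM) hA),
      div_le_div_iff₀ hB hden, ← hE1, ← hE2]
  constructor
  · intro h
    have h' : (P * b * A) * (s * M) ≤ (a * B) * (s * M) := by linear_combination h
    have h'' : P * b * A ≤ a * B := le_of_mul_le_mul_right h' hsM
    have h3 := mul_le_mul_of_nonneg_right h'' hP1.le
    linear_combination h3
  · intro h
    have h' : (P * b * A) * (P - 1) ≤ (a * B) * (P - 1) := by linear_combination h
    have h'' : P * b * A ≤ a * B := le_of_mul_le_mul_right h' hP1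
    have h3 := mul_le_mul_of_nonneg_right h'' hsM.le
    linear_combination h3

lemma key (n p k : ℕ) (hp : p.Prime) (hk : 1 ≤ k) (hpk : p ^ k ∣ n)
    (hnpk : ¬ p ^ (k + 1) ∣ n) (h2 : 2 < n / p) :
    (G (n / p) ≤ G n ↔
      Real.log (Real.log n) / Real.log (Real.log ((n : ℝ) / (p : ℝ)))
        ≤ ((p : ℝ) ^ (k + 1) - 1) / ((p : ℝ) ^ (k + 1) - p)) := by
  obtain ⟨k', rfl⟩ : ∃ k', k = k' + 1 := ⟨k - 1, by omega⟩
  have hn3 : 3 ≤ n := le_trans h2 (Nat.div_le_self n p)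
  have hn0 : n ≠ 0 := by omega
  have hp0 : (p : ℝ) ≠ 0 := by exact_mod_cast hp.pos.ne'
  obtain ⟨m, hnm⟩ := hpk
  have hm0 : m ≠ 0 := by rintro rfl; rw [Nat.mul_zero] at hnm; omega
  have hm : ¬ p ∣ m := by
    intro hd
    apply hnpk
    obtain ⟨c, hc⟩ := hd
    exact ⟨c, by rw [hnm, hc, pow_succ]; ring⟩
  have hcop : Nat.Coprime (p ^ (k' + 1)) m :=
    Nat.Coprime.pow_left _ ((Nat.Prime.coprime_iff_not_dvd hp).mpr hm)
  have hcop' : Nat.Coprime (p ^ k') m :=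
    Nat.Coprime.pow_left _ ((Nat.Prime.coprime_iff_not_dvd hp).mpr hm)
  have hpdvd : p ∣ n := dvd_trans (dvd_pow_self p (by omega)) ⟨m, hnm⟩
  have hq : n / p = p ^ k' * m := by
    rw [hnm, show p ^ (k' + 1) * m = p * (p ^ k' * m) by rw [pow_succ]; ring,
      Nat.mul_div_cancel_left _ hp.pos]
  have hσn : (ArithmeticFunction.sigma 1 n : ℕ)
      = ArithmeticFunction.sigma 1 (p ^ (k' + 1)) * ArithmeticFunction.sigma 1 m := by
    rw [hnm]
    exact ArithmeticFunction.isMultiplicative_sigma.map_mul_of_coprime hcop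
  have hσq : (ArithmeticFunction.sigma 1 (n / p) : ℕ)
      = ArithmeticFunction.sigma 1 (p ^ k') * ArithmeticFunction.sigma 1 m := by
    rw [hq]
    exact ArithmeticFunction.isMultiplicative_sigma.map_mul_of_coprime hcop'
  have hcast : ((n / p : ℕ) : ℝ) = (n : ℝ) / (p : ℝ) := Nat.cast_div hpdvd hp0
  have hE1 : ((ArithmeticFunction.sigma 1 (p ^ (k' + 1)) : ℕ) : ℝ) * ((p : ℝ) - 1)
      = (p : ℝ) ^ (k' + 1 + 1) - 1 := sigma_pp hp (k' + 1)
  have hE2 : ((p : ℝ) * ((ArithmeticFunction.sigma 1 (p ^ k') : ℕ) : ℝ)) * ((p : ℝ) - 1)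
      = (p : ℝ) ^ (k' + 1 + 1) - (p : ℝ) := by
    have h := sigma_pp hp k'
    linear_combination (p : ℝ) * h
  have hapos : (0 : ℝ) < ((ArithmeticFunction.sigma 1 (p ^ (k' + 1)) : ℕ) : ℝ) := by
    exact_mod_cast sigma_pos' (pow_ne_zero _ hp.pos.ne')
  have hbpos : (0 : ℝ) < ((ArithmeticFunction.sigma 1 (p ^ k') : ℕ) : ℝ) := by
    exact_mod_cast sigma_pos' (pow_ne_zero _ hp.pos.ne')
  have hspos : (0 : ℝ) < ((ArithmeticFunction.sigma 1 m : ℕ) : ℝ) := by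
    exact_mod_cast sigma_pos' hm0
  have hApos : 0 < Real.log (Real.log n) := L_pos hn3
  have hBpos : 0 < Real.log (Real.log ((n : ℝ) / (p : ℝ))) := by
    rw [← hcast]; exact L_pos (by omega)
  have hMpos : (0 : ℝ) < (n : ℝ) / (p : ℝ) := by
    apply div_pos
    · exact_mod_cast (by omega : 0 < n)
    · exact_mod_cast hp.pos
  have hP1 : (1 : ℝ) < (p : ℝ) := by exact_mod_cast hp.one_lt
  have hNM : (n : ℝ) = (p : ℝ) * ((n : ℝ) / (p : ℝ)) := by field_simp
  have e1 : G n = ((ArithmeticFunction.sigma 1 (p ^ (k' + 1)) : ℕ) : ℝ)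
      * ((ArithmeticFunction.sigma 1 m : ℕ) : ℝ) / ((n : ℝ) * Real.log (Real.log n)) := by
    unfold G
    rw [hσn]
    push_cast
    ring
  have e2 : G (n / p) = ((ArithmeticFunction.sigma 1 (p ^ k') : ℕ) : ℝ)
      * ((ArithmeticFunction.sigma 1 m : ℕ) : ℝ)
      / (((n : ℝ) / (p : ℝ)) * Real.log (Real.log ((n : ℝ) / (p : ℝ)))) := by
    unfold G
    rw [hσq, hcast]
    push_cast
    ring
  rw [e1, e2]
  exact real_key (k' + 1) _ _ _ _ _ _ _ _ hapos hbpos hspos hApos hBpos hMpos hP1 hNM hE1 hE2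

theorem GA1_criterion (n : ℕ) (hn : 1 < n) (hnp : ¬ n.Prime) :
    GA1 n ↔ ∀ p k : ℕ, p.Prime → 1 ≤ k → p ^ k ∣ n → ¬ p ^ (k + 1) ∣ n →
      2 < n / p →
      Real.log (Real.log n) / Real.log (Real.log (n / p))
        ≤ ((p : ℝ) ^ (k + 1) - 1) / ((p : ℝ) ^ (k + 1) - p) := by
  have hn0 : n ≠ 0 := by omega
  have hn3 : 3 ≤ n := by
    have h2 : n ≠ 2 := fun h => hnp (h ▸ Nat.prime_two)
    omega
  constructor
  · intro ⟨_, hG⟩ p k hp hk hpk hnpk h2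
    exact (key n p k hp hk hpk hnpk h2).mp
      (hG p hp (dvd_trans (dvd_pow_self p (by omega)) hpk))
  · intro h
    refine ⟨⟨hn, hnp⟩, fun p hp hpdvd => ?_⟩
    have hq0 : n / p ≠ 0 := (Nat.div_pos (Nat.le_of_dvd (by omega) hpdvd) hp.pos).ne'
    have hq1 : n / p ≠ 1 := by
      intro h1
      have hnpeq : n = p := by
        have := Nat.div_mul_cancel hpdvd
        rw [h1] at this; omega
      exact hnp (hnpeq ▸ hp)
    have h2le : 2 ≤ n / p := (Nat.two_le_iff _).mpr ⟨hq0, hq1⟩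
    rcases eq_or_lt_of_le h2le with heq | hlt
    · rw [← heq]
      exact le_of_lt (lt_trans G_two_neg (G_pos hn3))
    · set k := n.factorization p with hk_def
      have hk : 1 ≤ k := Nat.Prime.factorization_pos_of_dvd hp hn0 hpdvd
      exact (key n p k hp hk (Nat.ordProj_dvd n p)
        (Nat.pow_succ_factorization_not_dvd hn0 hp) hlt).mpr
        (h p k hp hk (Nat.ordProj_dvd n p) (Nat.pow_succ_factorization_not_dvd hn0 hp) hlt)
end

section
/- If p ≥ q ≥ 3 are (odd) primes, then pq is not a GA1 number; specifically, G(pq) < G(q) when p > q, and G(p²) < G(p) when p = q. -/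
lemma log_le_half (x : ℝ) (hx : 0 < x) : Real.log x ≤ x / 2 := by
  have h1 : Real.log (Real.sqrt x) ≤ Real.sqrt x - 1 :=
    Real.log_le_sub_one_of_pos (Real.sqrt_pos.mpr hx)
  rw [Real.log_sqrt hx.le] at h1
  nlinarith [sq_nonneg (Real.sqrt x - 2), Real.sq_sqrt hx.le, Real.sqrt_nonneg x]

lemma log_log_gt_one' {x : ℝ} (hx : 3 ≤ x) : 1 < Real.log x :=
  (Real.lt_log_iff_exp_lt (by linarith)).mpr (by linarith [Real.exp_one_lt_d9])

lemma key_bound (x y : ℝ) (hx : 3 ≤ x) (hxy : x ≤ y) :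
    Real.log (Real.log x) < y * Real.log 2 := by
  have hlx : 1 < Real.log x := log_log_gt_one' hx
  have h1 : Real.log (Real.log x) < Real.log x := by
    have := Real.log_lt_sub_one_of_pos (x := Real.log x) (by linarith) (by linarith)
    linarith
  have h2 : Real.log x ≤ x / 2 := log_le_half x (by linarith)
  have h3 : (0.6931471803 : ℝ) < Real.log 2 := Real.log_two_gt_d9
  nlinarith

theorem odd_prime_product_not_GA1 (p q : ℕ) (hp : p.Prime) (hq : q.Prime)
    (hq3 : 3 ≤ q) (hqp : q ≤ p) :
    ¬ GA1 (p * q) ∧ (q < p → G (p * q) < G q) ∧ (p = q → G (p ^ 2) < G p) := by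
  have hsp : (ArithmeticFunction.sigma 1 p : ℕ) = p + 1 := by
    have := ArithmeticFunction.sigma_one_apply_prime_pow (i := 1) hp
    simpa [Finset.sum_range_succ, Nat.add_comm] using this
  have hsq : (ArithmeticFunction.sigma 1 q : ℕ) = q + 1 := by
    have := ArithmeticFunction.sigma_one_apply_prime_pow (i := 1) hq
    simpa [Finset.sum_range_succ, Nat.add_comm] using this
  have hQ3 : (3 : ℝ) ≤ (q : ℝ) := by exact_mod_cast hq3
  have hP3 : (3 : ℝ) ≤ (p : ℝ) := by
    have : 3 ≤ p := le_trans hq3 hqp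
    exact_mod_cast this
  have hPQ : (q : ℝ) ≤ (p : ℝ) := by exact_mod_cast hqp
  have hlQ : 1 < Real.log q := log_log_gt_one' hQ3
  have hlP : 1 < Real.log p := log_log_gt_one' hP3
  have hlQP : Real.log q ≤ Real.log p := Real.log_le_log (by linarith) hPQ
  have hlog2 : (0 : ℝ) < Real.log 2 := Real.log_pos (by norm_num)
  -- part 2
  have part2 : q < p → G (p * q) < G q := by
    intro hlt
    have hne : p ≠ q := Nat.ne_of_gt hlt
    have hcop : Nat.Coprime p q := (Nat.coprime_primes hp hq).mpr hne
    have hspq : (ArithmeticFunction.sigma 1 (p * q) : ℕ) = (p + 1) * (q + 1) := by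
      rw [ArithmeticFunction.isMultiplicative_sigma.map_mul_of_coprime hcop, hsp, hsq]
    set L0 := Real.log (Real.log q) with hL0def
    have hL0 : 0 < L0 := Real.log_pos hlQ
    have hlogmul : Real.log ((p : ℝ) * q) = Real.log p + Real.log q :=
      Real.log_mul (by positivity) (by positivity)
    set L1 := Real.log (Real.log p + Real.log q) with hL1def
    have hL1ge : Real.log 2 + L0 ≤ L1 := by
      have h2q : (2 : ℝ) * Real.log q ≤ Real.log p + Real.log q := by linarith
      have h := Real.log_le_log (by positivity) h2q
      rwa [Real.log_mul two_ne_zero (by linarith)] at h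
    have hkey : L0 < (p : ℝ) * Real.log 2 := key_bound q p hQ3 hPQ
    have h5 : ((p : ℝ) + 1) * L0 < (p : ℝ) * L1 := by nlinarith
    have hL1pos : 0 < L1 := by linarith
    unfold G
    rw [hspq, hsq]
    push_cast
    rw [hlogmul]
    rw [div_lt_div_iff₀ (by positivity) (by positivity)]
    have hQpos : (0 : ℝ) < (q : ℝ) := by linarith
    nlinarith [mul_lt_mul_of_pos_left h5 (show (0:ℝ) < ((q:ℝ)+1) * q by positivity)]
  -- part 3
  have part3 : p = q → G (p ^ 2) < G p := by
    intro _
    have hsp2 : (ArithmeticFunction.sigma 1 (p ^ 2) : ℕ) = p ^ 2 + p + 1 := by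
      have := ArithmeticFunction.sigma_one_apply_prime_pow (i := 2) hp
      simp [Finset.sum_range_succ] at this
      omega
    set L0 := Real.log (Real.log p) with hL0def
    have hL0 : 0 < L0 := Real.log_pos hlP
    have hlogsq : Real.log ((p : ℝ) ^ 2) = 2 * Real.log p := by
      rw [Real.log_pow]; push_cast; ring
    have hL2 : Real.log (2 * Real.log p) = Real.log 2 + L0 :=
      Real.log_mul two_ne_zero (by linarith)
    have hkey : L0 < (p : ℝ) * Real.log 2 := key_bound p p hP3 le_rfl
    unfold G
    rw [hsp2, hsp]
    push_cast
    rw [hlogsq, hL2]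
    rw [div_lt_div_iff₀ (by positivity) (by positivity)]
    nlinarith [hkey, hL0, hP3, hlog2]
  refine ⟨?_, part2, part3⟩
  rintro ⟨-, hall⟩
  rcases lt_or_eq_of_le hqp with hlt | heq
  · have h := hall p hp (dvd_mul_right p q)
    rw [Nat.mul_div_cancel_left q hp.pos] at h
    exact absurd h (not_le.mpr (part2 hlt))
  · subst heq
    have h := hall q hq (dvd_mul_right q q)
    rw [Nat.mul_div_cancel_left q hq.pos] at h
    have h2 := part3 rfl
    rw [sq] at h2
    exact absurd h (not_le.mpr h2)
end
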